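/- arXiv:1508.05622 — 4 statements merged into one kernel-verified Lean document; each statement's English description precedes it below -/
import Mathlib

section
/- Let x ∈ R^r_+ have rationally independent coordinates and let {v_s} be its Brun orbit (v_0 = x, v_{s+1} = T v_s, where T subtracts the second-largest coordinate from the largest). Then for every index i and every h ∈ N, there exists m > h such that the largest coordinate of v_m is in position i, i.e., the index i occurs as the 'maximal index' infinitely often along the Brun orbit. -/
/-!
A Brun step is a unimodular operation, so rational independence is preserved along the orbit;
in particular coordinates never coincide, and all of them stay positive. Suppose that from some
time on the index `i` is never maximal. Then coordinate `i` is frozen at a value `c > 0`, while the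
second largest coordinate, which is subtracted at each step, is at least `c`. The coordinate sum
would then decrease by at least `c` at every step, contradicting positivity.
-/

/-- `y` is obtained from `x` by one step of Brun's unordered algorithm: the second
largest coordinate is subtracted from the largest one (smallest indices among ties). -/
def IsBrunStep {r : ℕ} (x y : Fin r → ℝ) : Prop :=
  ∃ m s : Fin r, s ≠ m ∧ (∀ j, x j ≤ x m) ∧ (∀ i, (∀ j, x j ≤ x i) → m ≤ i) ∧
    (∀ j, j ≠ m → x j ≤ x s) ∧ (∀ i, i ≠ m → (∀ j, j ≠ m → x j ≤ x i) → s ≤ i) ∧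
    y = Function.update x m (x m - x s)

lemma LinearIndependent.update_sub {ι R M : Type*} [DecidableEq ι] [Ring R] [AddCommGroup M]
    [Module R M] {x : ι → M} (hx : LinearIndependent R x) {m s : ι} (hsm : s ≠ m) :
    LinearIndependent R (Function.update x m (x m - x s)) := by
  have hupd : Function.update x m (x m - x s) = x + ((Pi.single m (-1) : ι → R) · • x s) := by
    ext j
    rcases eq_or_ne j m with rfl | hj
    · simp [sub_eq_add_neg]
    · simp [hj]
  rw [hupd, linearIndependent_add_smul_iff (Pi.single_eq_of_ne hsm _)]
  exact hx

namespace IsBrunStep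

variable {r : ℕ} {x y : Fin r → ℝ}

lemma linearIndependent (hxy : IsBrunStep x y) (hx : LinearIndependent ℚ x) :
    LinearIndependent ℚ y := by
  obtain ⟨m, s, hsm, -, -, -, -, rfl⟩ := hxy
  exact hx.update_sub hsm

lemma pos (hxy : IsBrunStep x y) (hpos : ∀ j, 0 < x j) (hx : LinearIndependent ℚ x) :
    ∀ j, 0 < y j := by
  obtain ⟨m, s, hsm, hmax, -, -, -, rfl⟩ := hxy
  have hlt : x s < x m := (hmax s).lt_of_ne fun h => hsm (hx.injective h)
  intro j
  rcases eq_or_ne j m with rfl | hj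
  · simpa using hlt
  · simpa [hj] using hpos j

lemma apply_eq_and_sum_le {i : Fin r} (hxy : IsBrunStep x y) (hi : ∃ j, x i < x j) :
    y i = x i ∧ ∑ j, y j ≤ ∑ j, x j - x i := by
  obtain ⟨m, s, -, hmax, -, hsec, -, rfl⟩ := hxy
  have him : i ≠ m := by
    rintro rfl
    obtain ⟨j, hj⟩ := hi
    exact (hmax j).not_gt hj
  refine ⟨Function.update_of_ne him _ _, ?_⟩
  rw [Finset.sum_update_of_mem (Finset.mem_univ m),
    Finset.sum_eq_sum_sdiff_singleton_add (Finset.mem_univ m) x]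
  -- the sum drops by the second largest coordinate, which dominates the non-maximal `x i`
  linarith [hsec i him]

end IsBrunStep

section Orbit

variable {r : ℕ} {v : ℕ → Fin r → ℝ}

lemma brun_orbit_pos_and_linearIndependent (hstep : ∀ n, IsBrunStep (v n) (v (n + 1)))
    (hpos : ∀ j, 0 < v 0 j) (hind : LinearIndependent ℚ (v 0)) (n : ℕ) :
    (∀ j, 0 < v n j) ∧ LinearIndependent ℚ (v n) := by
  induction n with
  | zero => exact ⟨hpos, hind⟩
  | succ n ih => exact ⟨(hstep n).pos ih.1 ih.2, (hstep n).linearIndependent ih.2⟩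

lemma brun_orbit_sum_le_of_not_max (hstep : ∀ n, IsBrunStep (v n) (v (n + 1)))
    {i : Fin r} {k : ℕ} (N : ℕ) (hi : ∀ n < N, ∃ j, v (k + n) i < v (k + n) j) :
    v (k + N) i = v k i ∧ ∑ j, v (k + N) j ≤ ∑ j, v k j - N * v k i := by
  induction N with
  | zero => simp
  | succ N ih =>
    obtain ⟨hfix, hsum⟩ := ih fun n hn => hi n (by omega)
    obtain ⟨hfix', hsum'⟩ := (hstep (k + N)).apply_eq_and_sum_le (hi N (by omega))
    rw [← add_assoc]
    refine ⟨hfix'.trans hfix, ?_⟩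
    push_cast
    linarith

end Orbit

theorem stmt4_general (r : ℕ) (x : Fin r → ℝ) (hx : ∀ i, 0 < x i)
    (hind : LinearIndependent ℚ x)
    (v : ℕ → Fin r → ℝ) (hv0 : v 0 = x)
    (hstep : ∀ s, IsBrunStep (v s) (v (s + 1))) :
    ∀ (i : Fin r) (h : ℕ), ∃ m : ℕ, h < m ∧ ∀ j, v m j ≤ v m i := by
  intro i h
  by_contra! hnever
  subst hv0
  have hinv := brun_orbit_pos_and_linearIndependent hstep hx hind
  have hc : 0 < v (h + 1) i := (hinv (h + 1)).1 i
  obtain ⟨N, hN⟩ := exists_nat_gt ((∑ j, v (h + 1) j) / v (h + 1) i)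
  rw [div_lt_iff₀ hc] at hN
  have hsum := (brun_orbit_sum_le_of_not_max hstep N fun n _ => hnever (h + 1 + n) (by omega)).2
  have hnonneg : 0 ≤ ∑ j, v (h + 1 + N) j := Finset.sum_nonneg fun j _ => ((hinv _).1 j).le
  linarith

/-- Along the Brun orbit of a rationally independent positive vector, every index `i`
occurs as the index of the largest coordinate infinitely often. -/
theorem stmt4 (r : ℕ) (hr : 2 ≤ r) (x : Fin r → ℝ) (hx : ∀ i, 0 < x i)
    (hind : LinearIndependent ℚ x)
    (v : ℕ → Fin r → ℝ) (hv0 : v 0 = x)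
    (hstep : ∀ s, IsBrunStep (v s) (v (s + 1))) :
    ∀ (i : Fin r) (h : ℕ), ∃ m : ℕ, h < m ∧ ∀ j, v m j ≤ v m i :=
  stmt4_general r x hx hind v hv0 hstep
end

section
/- Let x ∈ R^r_+ have rationally independent coordinates, and let A_n^x = M_1 M_2 ⋯ M_n be the product of the unfolding matrices determined by the first n steps of Brun's unordered algorithm applied to x (where the s-th step subtracting coordinate j from coordinate i contributes the matrix M_{i,j} equal to the identity with an extra 1 in position (i,j)). Then there exists N ∈ N such that A_n^x has all entries strictly positive for every n > N. -/
/-- `y` is obtained from `x` by the Brun step subtracting coordinate `s` (the second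
largest) from coordinate `m` (the largest), with ties broken by smallest index. -/
def IsBrunStepAt {r : ℕ} (x y : Fin r → ℝ) (m s : Fin r) : Prop :=
  s ≠ m ∧ (∀ j, x j ≤ x m) ∧ (∀ i, (∀ j, x j ≤ x i) → m ≤ i) ∧
    (∀ j, j ≠ m → x j ≤ x s) ∧ (∀ i, i ≠ m → (∀ j, j ≠ m → x j ≤ x i) → s ≤ i) ∧
    y = Function.update x m (x m - x s)

/-- The unfolding matrix `M i j`: identity with an extra `1` in position `(i,j)`. -/
def brunUnfold {r : ℕ} (i j : Fin r) : Matrix (Fin r) (Fin r) ℝ :=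
  1 + Matrix.single i j 1

/-!
For fixed `k`, the entries `A_n k l` are nondecreasing in `n`, and the step `(m, s)` adds
column `m` of `A_n` to column `s`. Hence the set `S` of columns eventually positive in row `k`
is, from some time on, closed under passing from the largest index `m` to the second largest
`s`. Along the orbit the next largest index is `m` or `s` (rational independence excludes
ties), and every index is infinitely often the largest: a coordinate that is never again the
largest stays constant and bounds every subtracted amount from below, so the coordinate sum
would become negative. As `k ∈ S`, once `k` is the largest index the largest index stays in `S`
forever, and so every column `l` lies in `S`.
-/

open Filter Function

namespace IsBrunStepAt

variable {r : ℕ} {x y : Fin r → ℝ} {m s : Fin r}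

lemma apply_of_ne (h : IsBrunStepAt x y m s) {j : Fin r} (hj : j ≠ m) : y j = x j := by
  rw [h.2.2.2.2.2, update_of_ne hj]

lemma eq_sub_single (h : IsBrunStepAt x y m s) : y = x - Pi.single m (x s) := by
  ext j
  rcases eq_or_ne j m with rfl | hj
  · simp [h.2.2.2.2.2]
  · simp [h.apply_of_ne hj, hj]

lemma lt (h : IsBrunStepAt x y m s) (hx : Injective x) : x s < x m :=
  (h.2.1 s).lt_of_ne (hx.ne h.1)

lemma pos (h : IsBrunStepAt x y m s) (hx : Injective x) (hpos : ∀ i, 0 < x i) (i : Fin r) :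
    0 < y i := by
  rcases eq_or_ne i m with rfl | hi
  · simpa [h.eq_sub_single] using h.lt hx
  · simpa [h.apply_of_ne hi] using hpos i

lemma linearIndependent (h : IsBrunStepAt x y m s) (hx : LinearIndependent ℚ x) :
    LinearIndependent ℚ y := by
  have hy : y = x + fun j => (Pi.single m (-1) : Fin r → ℚ) j • x s := by
    ext j
    rcases eq_or_ne j m with rfl | hj
    · simp [h.eq_sub_single, sub_eq_add_neg]
    · simp [h.apply_of_ne hj, hj]
  rw [hy]
  exact (linearIndependent_add_smul_iff (by simp [h.1])).2 hx

lemma sum_eq (h : IsBrunStepAt x y m s) : ∑ j, y j = ∑ j, x j - x s := by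
  simp [h.eq_sub_single, Finset.sum_sub_distrib]

lemma next_eq_or_eq {z : Fin r → ℝ} {m' s' : Fin r} (h : IsBrunStepAt x y m s)
    (h' : IsBrunStepAt y z m' s') (hx : Injective x) : m' = m ∨ m' = s := by
  by_contra! hne
  refine hne.2 (hx (le_antisymm (h.2.2.2.1 m' hne.1) ?_))
  calc x s = y s := (h.apply_of_ne h.1).symm
    _ ≤ y m' := h'.2.1 s
    _ = x m' := h.apply_of_ne hne.1

end IsBrunStepAt

def IsBrunOrbit {r : ℕ} (v : ℕ → Fin r → ℝ) (p : ℕ → Fin r × Fin r) : Prop :=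
  ∀ n, IsBrunStepAt (v n) (v (n + 1)) (p n).1 (p n).2

namespace IsBrunOrbit

variable {r : ℕ} {v : ℕ → Fin r → ℝ} {p : ℕ → Fin r × Fin r}

lemma pos_and_linearIndependent (hv : IsBrunOrbit v p) (h0 : ∀ i, 0 < v 0 i)
    (hind : LinearIndependent ℚ (v 0)) (n : ℕ) :
    (∀ i, 0 < v n i) ∧ LinearIndependent ℚ (v n) := by
  induction n with
  | zero => exact ⟨h0, hind⟩
  | succ n ih => exact ⟨(hv n).pos ih.2.injective ih.1, (hv n).linearIndependent ih.2⟩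

lemma exists_ge_fst_eq (hv : IsBrunOrbit v p) (hpos : ∀ n i, 0 < v n i) (i : Fin r) (N : ℕ) :
    ∃ n ≥ N, (p n).1 = i := by
  by_contra! hne
  have hconst : ∀ n ≥ N, v n i = v N i := by
    intro n hn
    induction n, hn using Nat.le_induction with
    | base => rfl
    | succ n hn ih => rw [(hv n).apply_of_ne (hne n hn).symm, ih]
  have hsum : ∀ d : ℕ, ∑ j, v (N + d) j + d * v N i ≤ ∑ j, v N j := by
    intro d
    induction d with
    | zero => simp
    | succ d ih =>
      have hle := (hv (N + d)).2.2.2.1 i (hne _ (by omega)).symm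
      rw [hconst _ (by omega)] at hle
      rw [← add_assoc, (hv _).sum_eq]
      push_cast
      linarith
  obtain ⟨d, hd⟩ := exists_nat_gt ((∑ j, v N j) / v N i)
  rw [div_lt_iff₀ (hpos N i)] at hd
  have := Finset.sum_pos (fun j _ => hpos (N + d) j) ⟨i, Finset.mem_univ i⟩
  linarith [hsum d]

lemma forall_mem_of_eventually_closed (hv : IsBrunOrbit v p) (hpos : ∀ n i, 0 < v n i)
    (hinj : ∀ n, Injective (v n)) {S : Set (Fin r)} {k : Fin r} (hk : k ∈ S)
    (hclosed : ∀ᶠ n in atTop, (p n).1 ∈ S → (p n).2 ∈ S) (l : Fin r) : l ∈ S := by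
  obtain ⟨N, hN⟩ := eventually_atTop.1 hclosed
  obtain ⟨n₁, hn₁, rfl⟩ := hv.exists_ge_fst_eq hpos k N
  obtain ⟨n₂, hn₂, rfl⟩ := hv.exists_ge_fst_eq hpos l n₁
  induction n₂, hn₂ using Nat.le_induction with
  | base => exact hk
  | succ n hn ih =>
    rcases (hv n).next_eq_or_eq (hv (n + 1)) (hinj n) with h | h <;> rw [h]
    · exact ih
    · exact hN n (hn₁.trans hn) ih

end IsBrunOrbit

section brunProd

variable {r : ℕ}

noncomputable def brunProd (p : ℕ → Fin r × Fin r) (n : ℕ) : Matrix (Fin r) (Fin r) ℝ :=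
  ((List.range n).map fun s => brunUnfold (p s).1 (p s).2).prod

variable (p : ℕ → Fin r × Fin r)

lemma brunProd_zero : brunProd p 0 = 1 := by
  simp [brunProd]

lemma mul_brunUnfold_apply (M : Matrix (Fin r) (Fin r) ℝ) (i j k l : Fin r) :
    (M * brunUnfold i j) k l = M k l + if l = j then M k i else 0 := by
  rw [brunUnfold, Matrix.mul_add, Matrix.mul_one, Matrix.add_apply]
  congr 1
  by_cases h : l = j
  · subst h
    rw [Matrix.mul_single_apply_same, mul_one, if_pos rfl]
  · rw [Matrix.mul_single_apply_of_ne 1 i j k l h, if_neg h]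

lemma brunProd_succ_apply (n : ℕ) (k l : Fin r) :
    brunProd p (n + 1) k l =
      brunProd p n k l + if l = (p n).2 then brunProd p n k (p n).1 else 0 := by
  simp only [brunProd, List.range_succ, List.map_append, List.prod_append, List.map_singleton,
    List.prod_singleton, mul_brunUnfold_apply]

lemma brunProd_nonneg (n : ℕ) (k l : Fin r) : 0 ≤ brunProd p n k l := by
  induction n generalizing l with
  | zero => simp [brunProd_zero, Matrix.one_apply, apply_ite]
  | succ n ih =>
    rw [brunProd_succ_apply]
    exact add_nonneg (ih l) (by split_ifs <;> simp [ih])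

lemma brunProd_mono (k l : Fin r) : Monotone fun n => brunProd p n k l :=
  monotone_nat_of_le_succ fun n => by
    rw [brunProd_succ_apply]
    exact le_add_of_nonneg_right (by split_ifs <;> simp [brunProd_nonneg])

variable {p}

lemma eventually_brunProd_pos_of_pos {n : ℕ} {k l : Fin r} (h : 0 < brunProd p n k l) :
    ∀ᶠ n' in atTop, 0 < brunProd p n' k l :=
  eventually_atTop.2 ⟨n, fun _ hn' => h.trans_le (brunProd_mono p k l hn')⟩

lemma brunProd_succ_pos {n : ℕ} {k : Fin r} (h : 0 < brunProd p n k (p n).1) :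
    0 < brunProd p (n + 1) k (p n).2 := by
  rw [brunProd_succ_apply, if_pos rfl]
  exact add_pos_of_nonneg_of_pos (brunProd_nonneg p n k _) h

theorem IsBrunOrbit.eventually_brunProd_pos {v : ℕ → Fin r → ℝ} (hv : IsBrunOrbit v p)
    (hpos : ∀ n i, 0 < v n i) (hinj : ∀ n, Injective (v n)) (k l : Fin r) :
    ∀ᶠ n in atTop, 0 < brunProd p n k l := by
  let S : Set (Fin r) := {i | ∀ᶠ n in atTop, 0 < brunProd p n k i}
  have hk : k ∈ S := eventually_brunProd_pos_of_pos (n := 0) (by simp [brunProd_zero])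
  have hS : ∀ᶠ n in atTop, ∀ i ∈ S, 0 < brunProd p n k i :=
    eventually_all.2 fun _ => eventually_imp_distrib_left.2 id
  refine hv.forall_mem_of_eventually_closed hpos hinj hk ?_ l
  filter_upwards [hS] with n hn hm
  exact eventually_brunProd_pos_of_pos (brunProd_succ_pos (hn _ hm))

end brunProd

theorem stmt5_general (r : ℕ) (x : Fin r → ℝ) (hx : ∀ i, 0 < x i)
    (hind : LinearIndependent ℚ x)
    (v : ℕ → Fin r → ℝ) (hv0 : v 0 = x)
    (p : ℕ → Fin r × Fin r)
    (hstep : ∀ s, IsBrunStepAt (v s) (v (s + 1)) (p s).1 (p s).2) :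
    ∃ N : ℕ, ∀ n, N < n → ∀ k l,
      0 < (((List.range n).map (fun s => brunUnfold (p s).1 (p s).2)).prod) k l := by
  subst hv0
  have horbit : IsBrunOrbit v p := hstep
  have hvn n := horbit.pos_and_linearIndependent hx hind n
  have hA : ∀ᶠ n in atTop, ∀ k l, 0 < brunProd p n k l :=
    eventually_all.2 fun k => eventually_all.2 fun l =>
      horbit.eventually_brunProd_pos (fun n => (hvn n).1) (fun n => (hvn n).2.injective) k l
  obtain ⟨N, hN⟩ := eventually_atTop.1 hA
  exact ⟨N, fun n hn => hN n hn.le⟩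

/-- The products `A n = M_{i₁ j₁} ⋯ M_{iₙ jₙ}` of the unfolding matrices along the Brun
orbit of a rationally independent positive vector are eventually strictly positive. -/
theorem stmt5 (r : ℕ) (hr : 2 ≤ r) (x : Fin r → ℝ) (hx : ∀ i, 0 < x i)
    (hind : LinearIndependent ℚ x)
    (v : ℕ → Fin r → ℝ) (hv0 : v 0 = x)
    (p : ℕ → Fin r × Fin r)
    (hstep : ∀ s, IsBrunStepAt (v s) (v (s + 1)) (p s).1 (p s).2) :
    ∃ N : ℕ, ∀ n, N < n → ∀ k l,
      0 < (((List.range n).map (fun s => brunUnfold (p s).1 (p s).2)).prod) k l :=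
  stmt5_general r x hx hind v hv0 p hstep
end

section
/- Let A be an r×r matrix with all entries strictly positive, with Perron-Frobenius eigenvector v (normalized in the simplex). Then for every ε > 0 there exists K such that for all k > K, the image of the open positive cone under A^k, projected to the standard simplex by normalizing coordinate sums to 1, is contained in the ε-ball around v. -/
/-!
Conjugating `A` by `diag v` and dividing by `λ` gives a row-stochastic matrix `P` with entries
`≥ θ > 0`, and `(A ^ n u)ᵢ = λⁿ vᵢ (Pⁿ x)ᵢ` with `x = u / v`. Applying `P` averages a vector, and
the weight `≥ θ` on every coordinate shrinks the interval containing its entries by the factor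
`1 - θ`. After the first step the entries of `P x` already lie within a factor `θ` of each other,
uniformly in `u`, so the relative spread of `Pⁿ x` tends to `0` uniformly; normalizing `v * Pⁿ x`
then lands uniformly close to `v`.
-/

open Matrix Set

section Stochastic

variable {ι : Type*} [Fintype ι] {P : Matrix ι ι ℝ} {θ : ℝ}

theorem entry_le_one_of_sum_eq_one (hθ : 0 ≤ θ) (hP : ∀ i j, θ ≤ P i j)
    (hrow : ∀ i, ∑ j, P i j = 1) (i j : ι) : P i j ≤ 1 :=
  hrow i ▸ Finset.single_le_sum (fun k _ => hθ.trans (hP i k)) (Finset.mem_univ j)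

theorem add_mul_sub_le_mulVec (hθ : 0 ≤ θ) (hP : ∀ i j, θ ≤ P i j)
    (hrow : ∀ i, ∑ j, P i j = 1) {x : ι → ℝ} {m : ℝ} (hm : ∀ j, m ≤ x j) (i j₀ : ι) :
    m + θ * (x j₀ - m) ≤ (P *ᵥ x) i := by
  have hsub : (P *ᵥ x) i - m = ∑ j, P i j * (x j - m) := by
    simp only [mulVec, dotProduct, mul_sub, Finset.sum_sub_distrib, ← Finset.sum_mul, hrow,
      one_mul]
  have hle : θ * (x j₀ - m) ≤ ∑ j, P i j * (x j - m) :=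
    calc θ * (x j₀ - m) ≤ P i j₀ * (x j₀ - m) :=
          mul_le_mul_of_nonneg_right (hP i j₀) (sub_nonneg.2 (hm j₀))
      _ ≤ ∑ j, P i j * (x j - m) :=
          Finset.single_le_sum (f := fun j => P i j * (x j - m))
            (fun j _ => mul_nonneg (hθ.trans (hP i j)) (sub_nonneg.2 (hm j)))
            (Finset.mem_univ j₀)
  linarith

theorem mulVec_le_sub_mul_sub (hθ : 0 ≤ θ) (hP : ∀ i j, θ ≤ P i j)
    (hrow : ∀ i, ∑ j, P i j = 1) {x : ι → ℝ} {M : ℝ} (hM : ∀ j, x j ≤ M) (i j₀ : ι) :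
    (P *ᵥ x) i ≤ M - θ * (M - x j₀) := by
  have := add_mul_sub_le_mulVec hθ hP hrow (x := -x) (m := -M) (fun j => neg_le_neg (hM j)) i j₀
  simp only [mulVec_neg, Pi.neg_apply] at this
  linarith

/-- Both bounds are taken at the same coordinate `j₀`, which is what makes the widths subtract
to `(1 - θ) * (M - m)`. -/
theorem exists_Icc_mulVec [Nonempty ι] (hθ : 0 ≤ θ) (hP : ∀ i j, θ ≤ P i j)
    (hrow : ∀ i, ∑ j, P i j = 1) {x : ι → ℝ} {m M : ℝ} (hx : ∀ j, x j ∈ Icc m M) :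
    ∃ m' M', m ≤ m' ∧ M' - m' = (1 - θ) * (M - m) ∧ ∀ i, (P *ᵥ x) i ∈ Icc m' M' := by
  obtain ⟨j₀⟩ := ‹Nonempty ι›
  refine ⟨m + θ * (x j₀ - m), M - θ * (M - x j₀), ?_, by ring, fun i =>
    ⟨add_mul_sub_le_mulVec hθ hP hrow (fun j => (hx j).1) i j₀,
      mulVec_le_sub_mul_sub hθ hP hrow (fun j => (hx j).2) i j₀⟩⟩
  exact le_add_of_nonneg_right (mul_nonneg hθ (sub_nonneg.2 (hx j₀).1))

theorem exists_Icc_pow_mulVec [DecidableEq ι] [Nonempty ι] (hθ : 0 ≤ θ) (hP : ∀ i j, θ ≤ P i j)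
    (hrow : ∀ i, ∑ j, P i j = 1) {x : ι → ℝ} {m M : ℝ} (hx : ∀ j, x j ∈ Icc m M) (n : ℕ) :
    ∃ m' M', m ≤ m' ∧ M' - m' = (1 - θ) ^ n * (M - m) ∧ ∀ i, (P ^ n *ᵥ x) i ∈ Icc m' M' := by
  induction n with
  | zero => exact ⟨m, M, le_rfl, by ring, by simpa using hx⟩
  | succ n ih =>
    obtain ⟨m₁, M₁, hm₁, hw₁, hx₁⟩ := ih
    obtain ⟨m₂, M₂, hm₂, hw₂, hx₂⟩ := exists_Icc_mulVec hθ hP hrow hx₁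
    refine ⟨m₂, M₂, hm₁.trans hm₂, by rw [hw₂, hw₁]; ring, ?_⟩
    rwa [pow_succ', ← mulVec_mulVec]

theorem mulVec_mem_Icc_sum (hθ : 0 ≤ θ) (hP : ∀ i j, θ ≤ P i j)
    (hrow : ∀ i, ∑ j, P i j = 1) {x : ι → ℝ} (hx : ∀ j, 0 ≤ x j) (i : ι) :
    (P *ᵥ x) i ∈ Icc (θ * ∑ j, x j) (∑ j, x j) := by
  constructor
  · rw [Finset.mul_sum]
    exact Finset.sum_le_sum fun j _ => mul_le_mul_of_nonneg_right (hP i j) (hx j)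
  · exact Finset.sum_le_sum fun j _ =>
      mul_le_of_le_one_left (hx j) (entry_le_one_of_sum_eq_one hθ hP hrow i j)

theorem exists_Icc_pow_succ_mulVec [DecidableEq ι] [Nonempty ι] (hθ : 0 < θ) (hP : ∀ i j, θ ≤ P i j)
    (hrow : ∀ i, ∑ j, P i j = 1) {x : ι → ℝ} (hx : ∀ j, 0 ≤ x j) (hx₀ : 0 < ∑ j, x j)
    (n : ℕ) :
    ∃ a b, 0 < a ∧ b - a ≤ (1 - θ) ^ n / θ * a ∧ ∀ i, (P ^ (n + 1) *ᵥ x) i ∈ Icc a b := by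
  obtain ⟨i₀⟩ := ‹Nonempty ι›
  have hθ₁ : 0 ≤ 1 - θ := sub_nonneg.2 ((hP i₀ i₀).trans
    (entry_le_one_of_sum_eq_one hθ.le hP hrow i₀ i₀))
  obtain ⟨a, b, hsa, hab, hy⟩ :=
    exists_Icc_pow_mulVec hθ.le hP hrow (mulVec_mem_Icc_sum hθ.le hP hrow hx) n
  refine ⟨a, b, (mul_pos hθ hx₀).trans_le hsa, ?_, by rwa [pow_succ, ← mulVec_mulVec]⟩
  calc b - a = (1 - θ) ^ n * (∑ j, x j - θ * ∑ j, x j) := hab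
    _ ≤ (1 - θ) ^ n * ∑ j, x j := by
        gcongr
        exact sub_le_self _ (mul_nonneg hθ.le hx₀.le)
    _ = (1 - θ) ^ n / θ * (θ * ∑ j, x j) := by field_simp
    _ ≤ (1 - θ) ^ n / θ * a := by gcongr

end Stochastic

theorem inv_sum_smul_smul {ι : Type*} [Fintype ι] {c : ℝ} (hc : c ≠ 0) (w : ι → ℝ) :
    (∑ i, (c • w) i)⁻¹ • (c • w) = (∑ i, w i)⁻¹ • w := by
  simp only [Pi.smul_apply, smul_eq_mul, ← Finset.mul_sum, smul_smul, mul_inv]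
  rw [mul_comm _ c, mul_inv_cancel_left₀ hc]

theorem dist_inv_sum_smul_mul_le {ι : Type*} [Fintype ι] {v y : ι → ℝ} (hv : ∀ i, 0 ≤ v i)
    (hsum : ∑ i, v i = 1) {a b : ℝ} (ha : 0 < a) (hy : ∀ i, y i ∈ Icc a b) :
    dist ((∑ i, (v * y) i)⁻¹ • (v * y)) v ≤ (b - a) / a := by
  set t := ∑ i, (v * y) i
  have hbound : ∀ c, ∑ i, v i * c = c := fun c => by rw [← Finset.sum_mul, hsum, one_mul]
  have hat : a ≤ t := hbound a ▸
    Finset.sum_le_sum fun i _ => mul_le_mul_of_nonneg_left (hy i).1 (hv i)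
  have htb : t ≤ b := hbound b ▸
    Finset.sum_le_sum fun i _ => mul_le_mul_of_nonneg_left (hy i).2 (hv i)
  have ht : 0 < t := ha.trans_le hat
  refine (dist_pi_le_iff (div_nonneg (by linarith) ha.le)).2 fun i => ?_
  have hvi : v i ≤ 1 := hsum ▸ Finset.single_le_sum (fun j _ => hv j) (Finset.mem_univ i)
  have hyt : |y i - t| ≤ b - a := abs_sub_le_iff.2 ⟨by linarith [(hy i).2], by linarith [(hy i).1]⟩
  calc dist (t⁻¹ * (v i * y i)) (v i) = v i * |y i - t| / t := by
        rw [Real.dist_eq, show t⁻¹ * (v i * y i) - v i = v i * (y i - t) / t by field_simp,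
          abs_div, abs_mul, abs_of_nonneg (hv i), abs_of_pos ht]
    _ ≤ 1 * (b - a) / a := by gcongr; linarith
    _ = (b - a) / a := by rw [one_mul]

section Conj

variable {ι : Type*} (A : Matrix ι ι ℝ) (v : ι → ℝ) (lam : ℝ)

noncomputable def stochasticConj : Matrix ι ι ℝ := Matrix.of fun i j => A i j * v j / (lam * v i)

variable {A v lam}

theorem stochasticConj_pos (hA : ∀ i j, 0 < A i j) (hv : ∀ i, 0 < v i) (hlam : 0 < lam)
    (i j : ι) : 0 < stochasticConj A v lam i j :=
  div_pos (mul_pos (hA i j) (hv j)) (mul_pos hlam (hv i))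

theorem sum_stochasticConj [Fintype ι] (hv : ∀ i, v i ≠ 0) (hlam : lam ≠ 0)
    (heig : A *ᵥ v = lam • v) (i : ι) : ∑ j, stochasticConj A v lam i j = 1 := by
  have hi : ∑ j, A i j * v j = lam * v i := by simpa [mulVec, dotProduct] using congrFun heig i
  simp only [stochasticConj, of_apply, ← Finset.sum_div, hi]
  exact div_self (mul_ne_zero hlam (hv i))

theorem pow_mulVec_eq [Fintype ι] [DecidableEq ι] (hv : ∀ i, v i ≠ 0) (hlam : lam ≠ 0) (n : ℕ)
    (u : ι → ℝ) :
    A ^ n *ᵥ u = lam ^ n • (v * (stochasticConj A v lam ^ n *ᵥ (u / v))) := by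
  have hconj : SemiconjBy (diagonal v) (lam • stochasticConj A v lam) A := by
    ext i j
    simp only [diagonal_mul, mul_diagonal, Matrix.smul_apply, stochasticConj,
      of_apply, smul_eq_mul]
    field_simp [hv i, hlam]
  have hu : u = diagonal v *ᵥ (u / v) := funext fun i => by
    rw [mulVec_diagonal, Pi.div_apply, mul_div_cancel₀ _ (hv i)]
  rw [hu, mulVec_mulVec, ← (hconj.pow_right n).eq, ← mulVec_mulVec, smul_pow, smul_mulVec,
    mulVec_smul, ← hu]
  ext i
  simp only [Pi.smul_apply, Pi.mul_apply, mulVec_diagonal]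

end Conj

theorem stmt9_general (r : ℕ) (A : Matrix (Fin r) (Fin r) ℝ)
    (hA : ∀ k l, 0 < A k l) (v : Fin r → ℝ) (hv : ∀ i, 0 < v i)
    (hsum : ∑ i, v i = 1) (lam : ℝ) (hlam : 0 < lam)
    (heig : A.mulVec v = lam • v) :
    ∀ ε > (0 : ℝ), ∃ K : ℕ, ∀ k, K < k → ∀ u : Fin r → ℝ, (∀ i, 0 < u i) →
      dist ((∑ i, (A ^ k).mulVec u i)⁻¹ • (A ^ k).mulVec u) v < ε := by
  have : Nonempty (Fin r) := Finset.univ_nonempty_iff.mp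
    (Finset.nonempty_of_sum_ne_zero (f := v) (hsum ▸ one_ne_zero))
  have hv₀ : ∀ i, v i ≠ 0 := fun i => (hv i).ne'
  set P := stochasticConj A v lam
  obtain ⟨⟨i₀, j₀⟩, hmin⟩ := Finite.exists_min fun p : Fin r × Fin r => P p.1 p.2
  set θ := P i₀ j₀
  have hθP : ∀ i j, θ ≤ P i j := fun i j => hmin (i, j)
  have hθ : 0 < θ := stochasticConj_pos hA hv hlam i₀ j₀
  have hrow := sum_stochasticConj hv₀ hlam.ne' heig
  have hθ₁ : θ ≤ 1 := entry_le_one_of_sum_eq_one hθ.le hθP hrow i₀ j₀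
  intro ε hε
  obtain ⟨N, hN⟩ := exists_pow_lt_of_lt_one (mul_pos hθ hε) (sub_lt_self 1 hθ)
  refine ⟨N, fun k hk u hu => ?_⟩
  obtain ⟨n, rfl⟩ : ∃ n, k = n + 1 := Nat.exists_eq_add_one.2 (by omega)
  have hx : ∀ j, 0 < (u / v) j := fun j => div_pos (hu j) (hv j)
  obtain ⟨a, b, ha, hab, hy⟩ := exists_Icc_pow_succ_mulVec hθ hθP hrow (fun j => (hx j).le)
    (Finset.sum_pos (fun j _ => hx j) Finset.univ_nonempty) n
  rw [pow_mulVec_eq hv₀ hlam.ne', inv_sum_smul_smul (pow_ne_zero _ hlam.ne')]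
  calc _ ≤ (b - a) / a := dist_inv_sum_smul_mul_le (fun i => (hv i).le) hsum ha hy
    _ ≤ (1 - θ) ^ n / θ := by rwa [div_le_iff₀ ha]
    _ ≤ (1 - θ) ^ N / θ := div_le_div_of_nonneg_right
        (pow_le_pow_of_le_one (by linarith) (by linarith) (by omega)) hθ.le
    _ < ε := by rwa [div_lt_iff₀' hθ]

/-- A strictly positive matrix `A` with Perron-Frobenius eigenvector `v` in the simplex
contracts the open positive cone to `v`: for every `ε > 0`, for all sufficiently large
`k`, the normalized image of every positive vector under `A ^ k` is `ε`-close to `v`. -/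
theorem stmt9 (r : ℕ) (hr : 2 ≤ r) (A : Matrix (Fin r) (Fin r) ℝ)
    (hA : ∀ k l, 0 < A k l) (v : Fin r → ℝ) (hv : ∀ i, 0 < v i)
    (hsum : ∑ i, v i = 1) (lam : ℝ) (hlam : 0 < lam)
    (heig : A.mulVec v = lam • v) :
    ∀ ε > (0 : ℝ), ∃ K : ℕ, ∀ k, K < k → ∀ u : Fin r → ℝ, (∀ i, 0 < u i) →
      dist ((∑ i, (A ^ k).mulVec u i)⁻¹ • (A ^ k).mulVec u) v < ε :=
  stmt9_general r A hA v hv hsum lam hlam heig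
end

section
/- If G is a finite connected trivalent graph with no separating edges, v_0 a vertex of G, and E, E', E'' the three edges incident at v_0, then G − {v_0} is connected (i.e., removing the vertex v_0 does not disconnect G). -/
/-!
Let `H = G - v₀`. Since an edge `v₀x` is not a bridge, some path from `v₀` to `x` avoids it; its
first step goes to a neighbour `y ≠ x` of `v₀`, and the rest of it lies in `H`. So in `H` every
neighbour of `v₀` is joined to a different neighbour, and with only three neighbours this puts all
of them in one component. Every other vertex `u` is joined in `H` to the second vertex of a path
from `v₀` to `u`, which is a neighbour of `v₀`.
-/

open Finset in
theorem Finset.rel_of_card_le_three {α : Type*} {r : α → α → Prop} (hr : Equivalence r)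
    {s : Finset α} (hs : #s ≤ 3) (h : ∀ x ∈ s, ∃ y ∈ s, y ≠ x ∧ r x y)
    {x y : α} (hx : x ∈ s) (hy : y ∈ s) : r x y := by
  classical
  by_contra hxy
  obtain ⟨x', hx', hx'x, hxx'⟩ := h x hx
  obtain ⟨y', hy', hy'y, hyy'⟩ := h y hy
  have hsub : ({x, x', y, y'} : Finset α) ⊆ s := by simp [insert_subset_iff, *]
  have hcard : #({x, x', y, y'} : Finset α) = 4 := by
    have : x ≠ y := fun e => hxy (e ▸ hr.refl x)
    have : x' ≠ y := fun e => hxy (e ▸ hxx')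
    have : y' ≠ x := fun e => hxy (hr.symm (e ▸ hyy'))
    have : y' ≠ x' := fun e => hxy (hr.trans hxx' (hr.symm (e ▸ hyy')))
    grind
  have := card_le_card hsub
  omega

namespace SimpleGraph

variable {V : Type*} {G : SimpleGraph V}

theorem Reachable.exists_adj_reachable_induce_ne {v₀ u : V} (h : G.Reachable v₀ u)
    (hu : u ≠ v₀) :
    ∃ b, ∃ hb : G.Adj v₀ b, (G.induce {v | v ≠ v₀}).Reachable ⟨b, hb.ne'⟩ ⟨u, hu⟩ := by
  classical
  obtain ⟨p, hp⟩ := h.some.toPath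
  cases p with
  | nil => exact absurd rfl hu
  | cons hb q =>
    have hq : v₀ ∉ q.support := ((Walk.cons_isPath_iff _ _).mp hp).2
    exact ⟨_, hb, ⟨q.induce _ fun x hx => ne_of_mem_of_not_mem hx hq⟩⟩

theorem exists_adj_ne_reachable_induce_ne {v₀ x : V} (hx : G.Adj v₀ x)
    (hx_bridge : ¬ G.IsBridge s(v₀, x)) :
    ∃ y, ∃ hy : G.Adj v₀ y, y ≠ x ∧
      (G.induce {v | v ≠ v₀}).Reachable ⟨x, hx.ne'⟩ ⟨y, hy.ne'⟩ := by
  rw [isBridge_iff, not_not] at hx_bridge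
  obtain ⟨y, hy, hreach⟩ := hx_bridge.exists_adj_reachable_induce_ne hx.ne'
  rw [deleteEdges_adj, Set.mem_singleton_iff] at hy
  refine ⟨y, hy.1, fun hyx => hy.2 (hyx ▸ rfl), ?_⟩
  exact (hreach.mono (comap_monotone _ (deleteEdges_le _))).symm

end SimpleGraph

open SimpleGraph Finset in
theorem stmt12_general (V : Type) [Fintype V] (G : SimpleGraph V)
    [DecidableRel G.Adj] (hconn : G.Connected) (hdeg : ∀ v, G.degree v = 3)
    (hns : ∀ e ∈ G.edgeSet, (G.deleteEdges {e}).Connected) (v0 : V) :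
    (SimpleGraph.induce {v : V | v ≠ v0} G).Connected := by
  classical
  set H := G.induce {v : V | v ≠ v0}
  let N := (G.neighborFinset v0).subtype (· ∈ {v : V | v ≠ v0})
  have hN : #N ≤ 3 := by
    rw [card_subtype, ← hdeg v0, ← card_neighborFinset_eq_degree]
    exact card_filter_le _ _
  have hpartner : ∀ x ∈ N, ∃ y ∈ N, y ≠ x ∧ H.Reachable x y := by
    rintro ⟨x, _⟩ hxN
    have hx : G.Adj v0 x := by simpa [N] using hxN
    obtain ⟨y, hy, hyx, hxy⟩ := exists_adj_ne_reachable_induce_ne hx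
      fun hb => isBridge_iff.mp hb ((hns _ hx).preconnected v0 x)
    exact ⟨⟨y, hy.ne'⟩, by simpa [N] using hy, by simpa using hyx, hxy⟩
  have hN_reachable {x y} (hx : x ∈ N) (hy : y ∈ N) : H.Reachable x y :=
    rel_of_card_le_three H.reachable_is_equivalence hN hpartner hx hy
  obtain ⟨a, ha⟩ : (G.neighborFinset v0).Nonempty := by
    rw [← card_pos, card_neighborFinset_eq_degree, hdeg]; norm_num
  rw [mem_neighborFinset] at ha
  rw [connected_iff_exists_forall_reachable]
  refine ⟨⟨a, ha.ne'⟩, fun ⟨u, hu⟩ => ?_⟩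
  obtain ⟨b, hb, hbu⟩ := (hconn.preconnected v0 u).exists_adj_reachable_induce_ne hu
  exact (hN_reachable (by simpa [N] using ha) (by simpa [N] using hb)).trans hbu

/-- Removing a vertex from a finite connected trivalent graph with no separating edges
leaves a connected graph. -/
theorem stmt12 (V : Type) [Fintype V] [DecidableEq V] (G : SimpleGraph V)
    [DecidableRel G.Adj] (hconn : G.Connected) (hdeg : ∀ v, G.degree v = 3)
    (hns : ∀ e ∈ G.edgeSet, (G.deleteEdges {e}).Connected) (v0 : V) :
    (SimpleGraph.induce {v : V | v ≠ v0} G).Connected :=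
  stmt12_general V G hconn hdeg hns v0
end
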